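/- Let p < q < r be primes with p dividing q − 1 and p dividing r − 1, and let t be an integer whose residue class modulo qr is a unit of multiplicative order p, with t of order p modulo q and of order p modulo r. Then the group G(p, qr, t) has exactly p + (q·r − 1)/p conjugacy classes. -/

import Mathlib

/-!
Conjugating `(b, a)` by `(c, h)` in `(ℤ/eℤ) ⋊ (ℤ/dℤ)` gives `(uʰ b + (1 - uᵃ) c, a)`.
If `1 - v` is a unit for every `v ≠ 1` in `⟨u⟩`, then for each `a ≠ 0` all `(b, a)` are
conjugate, giving `d - 1` classes, while the classes inside `ℤ/eℤ` are the `⟨u⟩`-orbits: `{0}`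
and, the action being free off `0`, `(e - 1) / d` further ones (Burnside). For `e = qr` the unit
condition holds because a power `v ≠ 1` of `t` stays `≠ 1` modulo `q` and modulo `r`, where `t`
still has order `p`.
-/

/-- The units of `ZMod e` act on `Multiplicative (ZMod e)` as (multiplicative) automorphisms. -/
def unitsMulAut (e : ℕ) : (ZMod e)ˣ →* MulAut (Multiplicative (ZMod e)) where
  toFun u := AddEquiv.toMultiplicative (DistribMulAction.toAddAut (ZMod e)ˣ (ZMod e) u)
  map_one' := by
    ext x
    show Multiplicative.ofAdd ((1 : (ZMod e)ˣ) • x.toAdd) = x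
    simp
  map_mul' u v := by
    ext x
    show Multiplicative.ofAdd (((u * v) : (ZMod e)ˣ) • x.toAdd)
      = Multiplicative.ofAdd (u • v • x.toAdd)
    rw [mul_smul]

/-- The homomorphism `Multiplicative (ZMod d) →* (ZMod e)ˣ` sending `a` to `u ^ a`,
well defined since `u ^ d = 1`. -/
def zmodPowHom {e : ℕ} (d : ℕ) (u : (ZMod e)ˣ) (hu : u ^ d = 1) :
    Multiplicative (ZMod d) →* (ZMod e)ˣ :=
  AddMonoidHom.toMultiplicativeLeft
    (ZMod.lift d ⟨zmultiplesHom (Additive (ZMod e)ˣ) (Additive.ofMul u), by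
      simpa [zmultiplesHom, ← ofMul_pow] using congrArg Additive.ofMul hu⟩)

/-- The group `G(d,e,t)` where `u` is the unit of `ZMod e` given by `t` :
the semidirect product `(ℤ/eℤ) ⋊ (ℤ/dℤ)` in which `a ∈ ℤ/dℤ` acts on `ℤ/eℤ` by
`b ↦ t ^ a * b`.  This is the group with presentation
`⟨x, y | x ^ d = 1, y ^ e = 1, x⁻¹ * y * x = y ^ t⟩`, the element `(b, a)`
corresponding to `x ^ a * y ^ b`. -/
abbrev Gdet (d e : ℕ) (u : (ZMod e)ˣ) (hu : u ^ d = 1) : Type :=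
  SemidirectProduct (Multiplicative (ZMod e)) (Multiplicative (ZMod d))
    ((unitsMulAut e).comp (zmodPowHom d u hu))

theorem MulAction.card_add_card_group_eq_card_orbits_mul_card_group_add_one {K X : Type*}
    [Group K] [MulAction K X] [Finite K] [Finite X] (x₀ : X)
    (hfix : ∀ g : K, g ≠ 1 → fixedBy X g = {x₀}) :
    Nat.card X + Nat.card K = Nat.card (orbitRel.Quotient K X) * Nat.card K + 1 := by
  classical
  have := Fintype.ofFinite K
  have := Fintype.ofFinite X
  rw [Nat.card_eq_fintype_card (α := orbitRel.Quotient K X), Nat.card_eq_fintype_card (α := K),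
    ← sum_card_fixedBy_eq_card_orbits_mul_card_group,
    ← Finset.add_sum_erase _ _ (Finset.mem_univ 1)]
  simp only [← Nat.card_eq_fintype_card]
  rw [fixedBy_one_eq_univ, Finset.sum_congr rfl fun g hg => by
    rw [hfix g (Finset.ne_of_mem_erase hg)]]
  simp only [Nat.card_univ, Nat.card_unique, Finset.sum_const, smul_eq_mul, mul_one,
    Finset.card_erase_of_mem (Finset.mem_univ _), Finset.card_univ, ← Nat.card_eq_fintype_card]
  have : 0 < Nat.card K := Nat.card_pos
  omega

noncomputable def ConjClasses.equivOfIsConjIff {G β : Type*} [Monoid G] (f : G → β)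
    (hf : Function.Surjective f) (h : ∀ a b, IsConj a b ↔ f a = f b) : ConjClasses G ≃ β :=
  (Quotient.congrRight h).trans (Setoid.quotientKerEquivOfSurjective f hf)

open MulAction SemidirectProduct

section Gdet

variable {d e : ℕ} (u : (ZMod e)ˣ) (hu : u ^ d = 1)

lemma zmodPowHom_ofAdd_intCast (z : ℤ) :
    zmodPowHom d u hu (Multiplicative.ofAdd (z : ZMod d)) = u ^ z := by
  simp [zmodPowHom, ZMod.lift_coe]

lemma range_zmodPowHom : (zmodPowHom d u hu).range = Subgroup.zpowers u := by
  ext v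
  simp only [MonoidHom.mem_range, Subgroup.mem_zpowers_iff]
  constructor
  · rintro ⟨a, rfl⟩
    obtain ⟨z, hz⟩ := ZMod.intCast_surjective a.toAdd
    exact ⟨z, by rw [← zmodPowHom_ofAdd_intCast u hu, hz]; rfl⟩
  · rintro ⟨z, rfl⟩
    exact ⟨_, zmodPowHom_ofAdd_intCast u hu z⟩

lemma zmodPowHom_mem_zpowers (a : Multiplicative (ZMod d)) :
    zmodPowHom d u hu a ∈ Subgroup.zpowers u :=
  range_zmodPowHom u hu ▸ MonoidHom.mem_range.mpr ⟨a, rfl⟩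

lemma zmodPowHom_eq_one_iff (hord : orderOf u = d) {a : Multiplicative (ZMod d)} :
    zmodPowHom d u hu a = 1 ↔ a = 1 := by
  obtain ⟨z, hz⟩ := ZMod.intCast_surjective a.toAdd
  rw [← ofAdd_toAdd a, ← hz, zmodPowHom_ofAdd_intCast, ← orderOf_dvd_iff_zpow_eq_one, hord,
    ← ofAdd_zero, Multiplicative.ofAdd.injective.eq_iff, ZMod.intCast_zmod_eq_zero_iff_dvd]

lemma Gdet.conj_right (c g : Gdet d e u hu) : (c * g * c⁻¹).right = g.right := by
  simp [mul_comm c.right]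

lemma Gdet.conj_left (c g : Gdet d e u hu) :
    (c * g * c⁻¹).left.toAdd = (zmodPowHom d u hu c.right : ZMod e) * g.left.toAdd
      + (1 - (zmodPowHom d u hu g.right : ZMod e)) * c.left.toAdd := by
  rw [mul_left, mul_left, inv_left, mul_right, ← MulAut.mul_apply, ← map_mul,
    mul_inv_cancel_comm]
  change c.left.toAdd + (zmodPowHom d u hu c.right : ZMod e) * g.left.toAdd
    + (zmodPowHom d u hu g.right : ZMod e) * -c.left.toAdd = _
  ring

/-- A complete conjugacy invariant when every `1 - v`, `1 ≠ v ∈ ⟨u⟩`, is a unit: the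
`ℤ/dℤ`-coordinate if it is nonzero, and otherwise the `⟨u⟩`-orbit of the `ℤ/eℤ`-coordinate. -/
def Gdet.conjInvariant (g : Gdet d e u hu) :
    {a : Multiplicative (ZMod d) // a ≠ 1} ⊕ orbitRel.Quotient (Subgroup.zpowers u) (ZMod e) :=
  if h : g.right = 1 then .inr (Quotient.mk'' g.left.toAdd) else .inl ⟨g.right, h⟩

lemma Gdet.conjInvariant_conj (c g : Gdet d e u hu) :
    conjInvariant u hu (c * g * c⁻¹) = conjInvariant u hu g := by
  unfold conjInvariant
  rw [conj_right]
  split_ifs with h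
  · refine congrArg Sum.inr (Quotient.sound' ?_)
    refine ⟨⟨_, zmodPowHom_mem_zpowers u hu c.right⟩, ?_⟩
    rw [conj_left, h, map_one, Units.val_one, sub_self, zero_mul, add_zero]
    rfl
  · rfl

lemma Gdet.isConj_of_right_eq_one {g₁ g₂ : Gdet d e u hu} (h₁ : g₁.right = 1) (h₂ : g₂.right = 1)
    (h : orbitRel (Subgroup.zpowers u) (ZMod e) g₁.left.toAdd g₂.left.toAdd) : IsConj g₁ g₂ := by
  obtain ⟨⟨v, hv⟩, hvg⟩ := h
  rw [← range_zmodPowHom u hu] at hv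
  obtain ⟨k, rfl⟩ := hv
  refine (isConj_iff.mpr ⟨⟨1, k⟩, SemidirectProduct.ext ?_ (by rw [conj_right, h₁, h₂])⟩).symm
  apply Multiplicative.toAdd.injective
  rw [conj_left, h₂, map_one, Units.val_one, sub_self, zero_mul, add_zero]
  exact hvg

lemma Gdet.isConj_of_right_eq {g₁ g₂ : Gdet d e u hu} (h : g₁.right = g₂.right)
    (hunit : IsUnit (1 - (zmodPowHom d u hu g₁.right : ZMod e))) : IsConj g₁ g₂ := by
  obtain ⟨w, hw⟩ := hunit
  refine isConj_iff.mpr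
    ⟨⟨Multiplicative.ofAdd (↑w⁻¹ * (g₂.left.toAdd - g₁.left.toAdd)), 1⟩,
      SemidirectProduct.ext ?_ (by rw [conj_right, h])⟩
  apply Multiplicative.toAdd.injective
  rw [conj_left, ← hw, map_one, Units.val_one, one_mul, toAdd_ofAdd, Units.mul_inv_cancel_left]
  ring

lemma Gdet.conjInvariant_surjective : Function.Surjective (conjInvariant u hu) := by
  rintro (⟨a, ha⟩ | ω)
  · exact ⟨⟨1, a⟩, dif_neg ha⟩
  · obtain ⟨b, rfl⟩ := Quotient.mk''_surjective ω
    exact ⟨⟨Multiplicative.ofAdd b, 1⟩, dif_pos rfl⟩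

lemma Gdet.isConj_iff_conjInvariant_eq (hord : orderOf u = d)
    (hunit : ∀ v ∈ Subgroup.zpowers u, v ≠ 1 → IsUnit (1 - (v : ZMod e)))
    (g₁ g₂ : Gdet d e u hu) : IsConj g₁ g₂ ↔ conjInvariant u hu g₁ = conjInvariant u hu g₂ := by
  refine ⟨fun h => ?_, fun h => ?_⟩
  · obtain ⟨c, rfl⟩ := isConj_iff.mp h
    exact (conjInvariant_conj u hu c g₁).symm
  unfold conjInvariant at h
  split_ifs at h with h₁ h₂ h₂
  · exact isConj_of_right_eq_one u hu h₁ h₂ (Quotient.exact' (Sum.inr.inj h))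
  · exact isConj_of_right_eq u hu (congrArg Subtype.val (Sum.inl.inj h))
      (hunit _ (zmodPowHom_mem_zpowers u hu _) ((zmodPowHom_eq_one_iff u hu hord).not.mpr h₁))

lemma fixedBy_zpowers_eq_singleton_zero
    (hunit : ∀ v ∈ Subgroup.zpowers u, v ≠ 1 → IsUnit (1 - (v : ZMod e)))
    (v : Subgroup.zpowers u) (hv : v ≠ 1) : fixedBy (ZMod e) v = {0} := by
  ext x
  refine ⟨fun hx => ?_, fun hx => ?_⟩
  · have hx : (1 - ((v : (ZMod e)ˣ) : ZMod e)) * x = 0 := by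
      rw [sub_mul, one_mul, sub_eq_zero]
      exact hx.symm
    exact (hunit v v.2 (by simpa using hv)).mul_right_eq_zero.mp hx
  · rw [Set.mem_singleton_iff.mp hx]
    exact smul_zero _

theorem Gdet.card_conjClasses [NeZero e] (hord : orderOf u = d)
    (hunit : ∀ v ∈ Subgroup.zpowers u, v ≠ 1 → IsUnit (1 - (v : ZMod e))) :
    Nat.card (ConjClasses (Gdet d e u hu)) = d + (e - 1) / d := by
  have hd : 0 < d := hord ▸ orderOf_pos u
  have := NeZero.of_pos hd
  have hburnside := card_add_card_group_eq_card_orbits_mul_card_group_add_one (0 : ZMod e)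
    (fixedBy_zpowers_eq_singleton_zero u hunit)
  rw [Nat.card_zmod, Nat.card_zpowers, hord] at hburnside
  rw [Nat.card_congr (ConjClasses.equivOfIsConjIff _ (conjInvariant_surjective u hu)
    (isConj_iff_conjInvariant_eq u hu hord hunit)), Nat.card_sum]
  set Q := Nat.card (orbitRel.Quotient (Subgroup.zpowers u) (ZMod e))
  have hQ : 0 < Q := Nat.card_pos
  have hnontriv : Nat.card {a : Multiplicative (ZMod d) // a ≠ 1} = d - 1 := by
    simp [Nat.card_eq_fintype_card, Fintype.card_subtype_compl]
  have hdiv : (e - 1) / d = Q - 1 := Nat.div_eq_of_eq_mul_left hd (by rw [Nat.sub_one_mul]; omega)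
  omega

end Gdet

lemma eq_one_of_mem_zpowers_of_map_eq_one {G H : Type*} [Group G] [Group H] (f : G →* H)
    {x y : G} (hx : orderOf (f x) = orderOf x) (hy : y ∈ Subgroup.zpowers x) (hfy : f y = 1) :
    y = 1 := by
  obtain ⟨k, rfl⟩ := Subgroup.mem_zpowers_iff.mp hy
  rwa [map_zpow, ← orderOf_dvd_iff_zpow_eq_one, hx, orderOf_dvd_iff_zpow_eq_one] at hfy

lemma ZMod.isUnit_of_castHom_ne_zero {q r : ℕ} (hq : q.Prime) (hr : r.Prime) {x : ZMod (q * r)}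
    (hxq : ZMod.castHom (dvd_mul_right q r) (ZMod q) x ≠ 0)
    (hxr : ZMod.castHom (dvd_mul_left r q) (ZMod r) x ≠ 0) : IsUnit x := by
  have : NeZero (q * r) := ⟨(Nat.mul_pos hq.pos hr.pos).ne'⟩
  have coprime_of_castHom_ne_zero {m : ℕ} (hm : m.Prime) (hdvd : m ∣ q * r)
      (hx : ZMod.castHom hdvd (ZMod m) x ≠ 0) : x.val.Coprime m := by
    refine Nat.coprime_comm.mp (hm.coprime_iff_not_dvd.mpr fun h => hx ?_)
    rwa [ZMod.castHom_apply, ← ZMod.natCast_val, ZMod.natCast_eq_zero_iff]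
  rw [← ZMod.natCast_zmod_val x, ZMod.isUnit_iff_coprime]
  exact (coprime_of_castHom_ne_zero hq _ hxq).mul_right (coprime_of_castHom_ne_zero hr _ hxr)

lemma ZMod.castHom_one_sub_ne_zero_of_mem_zpowers {n m : ℕ} (hm : m ∣ n) {u v : (ZMod n)ˣ}
    (hord : orderOf (Units.map (ZMod.castHom hm (ZMod m)).toMonoidHom u) = orderOf u)
    (hv : v ∈ Subgroup.zpowers u) (hv1 : v ≠ 1) : ZMod.castHom hm (ZMod m) (1 - v) ≠ 0 := by
  refine fun h => hv1 (eq_one_of_mem_zpowers_of_map_eq_one _ hord hv (Units.ext ?_))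
  rw [map_sub, map_one, sub_eq_zero] at h
  exact h.symm

/-- **Class number of groups of order `pqr` with `d = p` (conditions A and B).**
Let `p < q < r` be primes with `p ∣ q - 1` and `p ∣ r - 1`, and let `t` be an integer
whose residue class modulo `q * r` is a unit of multiplicative order `p`, with `t` of
order `p` modulo `q` and of order `p` modulo `r`.  Then `G(p, qr, t)` has exactly
`p + (q * r - 1) / p` conjugacy classes. -/
theorem classNumber_pqr_condAB (p q r : ℕ) (hq : q.Prime) (hr : r.Prime) (t : ℤ)
    (u : (ZMod (q * r))ˣ) (hu : (u : ZMod (q * r)) = (t : ZMod (q * r)))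
    (hord : orderOf u = p)
    (uq : (ZMod q)ˣ) (huq : (uq : ZMod q) = (t : ZMod q)) (hordq : orderOf uq = p)
    (ur : (ZMod r)ˣ) (hur : (ur : ZMod r) = (t : ZMod r)) (hordr : orderOf ur = p) :
    Nat.card (ConjClasses
        (Gdet p (q * r) u (by rw [← hord]; exact pow_orderOf_eq_one u)))
      = p + (q * r - 1) / p := by
  have : NeZero (q * r) := ⟨(Nat.mul_pos hq.pos hr.pos).ne'⟩
  have hmapq : Units.map (ZMod.castHom (dvd_mul_right q r) (ZMod q)).toMonoidHom u = uq :=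
    Units.ext (by simp [hu, huq])
  have hmapr : Units.map (ZMod.castHom (dvd_mul_left r q) (ZMod r)).toMonoidHom u = ur :=
    Units.ext (by simp [hu, hur])
  refine Gdet.card_conjClasses u _ hord fun v hv hv1 => ZMod.isUnit_of_castHom_ne_zero hq hr ?_ ?_
  · exact ZMod.castHom_one_sub_ne_zero_of_mem_zpowers _ (by rw [hmapq, hordq, hord]) hv hv1
  · exact ZMod.castHom_one_sub_ne_zero_of_mem_zpowers _ (by rw [hmapr, hordr, hord]) hv hv1
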